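/- Let A ∈ ℝ^{n×d} have singular values λ1 ≥ … ≥ λ_d > 0, let b ∈ ℝ^n, and let n, B be positive integers, γ > 0, δ ≥ 0. Define F(x) := −γ((1/n)Aᵀ(Ax − b) + δx) and, for ρ ∈ ℝ, Φ_ρ(x) := (1 + ‖x‖²)·[2⟨x, F(x)⟩ + (γ²/(n²B))‖Ax − b‖²·tr(AᵀA)] − (2 − ρ)·(γ²/(n²B))‖Ax − b‖²·⟨x, AᵀAx⟩. Then lim sup_{‖x‖→∞} Φ_ρ(x)/‖x‖⁴ = −(γ²/(n²B))·inf_{m ∈ [λ_d², λ1²]} q(m, ρ), where q(m, ρ) := 2nB(m + nδ)/γ − (Σ_{i=1}^d λ_i²)·m + (2 − ρ)m². -/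

import Mathlib

/-!
With `m = ⟨x, AᵀAx⟩/‖x‖²`, `σ = ⟨x, Aᵀb⟩/‖x‖²` and `ε = 1/‖x‖²`, the quotient `Φ_ρ(x)/‖x‖⁴` is a
fixed polynomial `P(m, σ, ε)` with `P(m, 0, 0) = −(γ²/(n²B)) q(m, ρ)`. As `‖x‖ → ∞`, `σ` and `ε`
tend to `0` (Cauchy–Schwarz for `σ`) while the Rayleigh quotient `m` stays in the compact interval
`[λ_d², λ_1²]`, so `Φ_ρ(x)/‖x‖⁴ + (γ²/(n²B)) q(m, ρ) → 0` uniformly. This bounds the limsup by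
`−(γ²/(n²B)) min q`, and the bound is attained along the ray through a vector whose Rayleigh
quotient is a minimiser of `q`: every point of `[λ_d², λ_1²]` is a Rayleigh quotient of `AᵀA`,
since it averages the eigenvalues `λ_d²` and `λ_1²`.
-/

open Finset Matrix Filter

/-- Drift `F(x) = −γ((1/n)Aᵀ(Ax − b) + δx)` of homogenized SGD for ridge regression. -/
noncomputable def hsgdDrift (n d : ℕ) (γ δ : ℝ) (A : Matrix (Fin n) (Fin d) ℝ)
    (b : Fin n → ℝ) (x : Fin d → ℝ) : Fin d → ℝ :=
  (-γ) • ((n : ℝ)⁻¹ • (Aᵀ *ᵥ (A *ᵥ x - b)) + δ • x)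

/-- `Φ_ρ(x) = (1 + ‖x‖²)[2⟨x, F(x)⟩ + (γ²/(n²B))‖Ax − b‖² tr(AᵀA)]
              − (2 − ρ)(γ²/(n²B))‖Ax − b‖² ⟨x, AᵀAx⟩`. -/
noncomputable def hsgdPhi (n d B : ℕ) (γ δ ρ : ℝ) (A : Matrix (Fin n) (Fin d) ℝ)
    (b : Fin n → ℝ) (x : Fin d → ℝ) : ℝ :=
  (1 + x ⬝ᵥ x) *
      (2 * (x ⬝ᵥ hsgdDrift n d γ δ A b x) +
        γ ^ 2 / (n ^ 2 * B) * ((A *ᵥ x - b) ⬝ᵥ (A *ᵥ x - b)) * (Aᵀ * A).trace) -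
    (2 - ρ) * (γ ^ 2 / (n ^ 2 * B)) * ((A *ᵥ x - b) ⬝ᵥ (A *ᵥ x - b)) *
      (x ⬝ᵥ ((Aᵀ * A) *ᵥ x))

/-- The auxiliary quadratic `q(m, ρ) = 2nB(m + nδ)/γ − T·m + (2 − ρ)m²`,
where `T = Σ_{i=1}^d λ_i²`. -/
noncomputable def qAux (n B : ℕ) (γ δ T m ρ : ℝ) : ℝ :=
  2 * n * B * (m + n * δ) / γ - T * m + (2 - ρ) * m ^ 2

open Topology Function Set

theorem limsup_eq_of_eventually_le_of_tendsto_comp {α β : Type*} {L : Filter α} {l : Filter β}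
    [l.NeBot] {f : α → ℝ} {φ : β → α} {S : ℝ} (hle : ∀ ε > 0, ∀ᶠ x in L, f x ≤ S + ε)
    (hφ : Tendsto φ l L) (hfφ : Tendsto (f ∘ φ) l (𝓝 S)) :
    limsup f L = S := by
  have hfreq : ∀ ε > 0, ∃ᶠ x in L, S - ε ≤ f x := fun ε hε =>
    hφ.frequently (hfφ.eventually (eventually_ge_nhds (by linarith))).frequently
  have hcobdd : L.IsCoboundedUnder (· ≤ ·) f := .of_frequently_ge (hfreq 1 one_pos)
  have hbdd : L.IsBoundedUnder (· ≤ ·) f := ⟨S + 1, hle 1 one_pos⟩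
  refine le_antisymm (le_of_forall_pos_le_add fun ε hε => limsup_le_of_le hcobdd (hle ε hε))
    (le_of_forall_pos_le_add fun ε hε => ?_)
  linarith [le_limsup_of_frequently_le (hfreq ε hε) hbdd]

theorem IsCompact.tendsto_sub_of_eventually_mem {α X Y : Type*} [TopologicalSpace X]
    [TopologicalSpace Y] {K : Set X} (hK : IsCompact K) {G : X → Y → ℝ}
    (hG : Continuous (uncurry G)) {y₀ : Y} {l : Filter α} {u : α → X} {v : α → Y}
    (hu : ∀ᶠ a in l, u a ∈ K) (hv : Tendsto v l (𝓝 y₀)) :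
    Tendsto (fun a => G (u a) (v a) - G (u a) y₀) l (𝓝 0) := by
  have hF : Continuous fun p : X × Y => G p.1 p.2 - G p.1 y₀ :=
    hG.sub (hG.comp (continuous_fst.prodMk continuous_const))
  have huv : Tendsto (fun a => (u a, v a)) l (𝓝ˢ (K ×ˢ {y₀})) := by
    rw [hK.nhdsSet_prod_eq isCompact_singleton, nhdsSet_singleton]
    exact ((tendsto_principal.2 hu).mono_right principal_le_nhdsSet).prodMk hv
  have hmaps : MapsTo (fun p : X × Y => G p.1 p.2 - G p.1 y₀) (K ×ˢ {y₀}) {0} := by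
    rintro ⟨x, y⟩ ⟨-, rfl : y = y₀⟩
    simp
  rw [← nhdsSet_singleton]
  exact (hF.tendsto_nhdsSet hmaps).comp huv

section

variable {ι : Type*} [Fintype ι]

theorem dotProduct_self_nonneg (x : ι → ℝ) : 0 ≤ x ⬝ᵥ x :=
  Finset.sum_nonneg fun i _ => mul_self_nonneg (x i)

theorem dotProduct_self_pos {x : ι → ℝ} (hx : x ≠ 0) : 0 < x ⬝ᵥ x :=
  (dotProduct_self_nonneg x).lt_of_ne' (dotProduct_self_eq_zero.not.2 hx)

theorem dotProduct_sq_le (x v : ι → ℝ) : (x ⬝ᵥ v) ^ 2 ≤ (x ⬝ᵥ x) * (v ⬝ᵥ v) := by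
  simpa only [dotProduct, sq] using Finset.sum_mul_sq_le_sq_mul_sq univ x v

theorem tendsto_dotProduct_self_comap_sqrt :
    Tendsto (fun x : ι → ℝ => x ⬝ᵥ x) (comap (fun x : ι → ℝ => √(x ⬝ᵥ x)) atTop) atTop :=
  ((tendsto_pow_atTop two_ne_zero).comp tendsto_comap).congr fun x =>
    Real.sq_sqrt (dotProduct_self_nonneg x)

theorem tendsto_dotProduct_div_dotProduct_self (v : ι → ℝ) :
    Tendsto (fun x : ι → ℝ => x ⬝ᵥ v / (x ⬝ᵥ x))
      (comap (fun x : ι → ℝ => √(x ⬝ᵥ x)) atTop) (𝓝 0) := by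
  have hsqrt :=
    ((tendsto_dotProduct_self_comap_sqrt (ι := ι)).inv_tendsto_atTop.const_mul (v ⬝ᵥ v)).sqrt
  rw [mul_zero, Real.sqrt_zero] at hsqrt
  refine squeeze_zero_norm' ?_ hsqrt
  filter_upwards [tendsto_dotProduct_self_comap_sqrt.eventually_gt_atTop 0] with x hx
  rw [Real.norm_eq_abs, Pi.inv_apply]
  refine Real.abs_le_sqrt ?_
  rw [div_pow, div_le_iff₀ (by positivity)]
  have := dotProduct_sq_le x v
  field_simp
  linarith

theorem tendsto_smul_comap_sqrt_dotProduct_self {u : ι → ℝ} (hu : u ≠ 0) :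
    Tendsto (fun t : ℝ => t • u) atTop (comap (fun x : ι → ℝ => √(x ⬝ᵥ x)) atTop) := by
  have hu' : 0 < √(u ⬝ᵥ u) := Real.sqrt_pos.2 (dotProduct_self_pos hu)
  refine tendsto_comap_iff.2 ((tendsto_abs_atTop_atTop.atTop_mul_const hu').congr fun t => ?_)
  simp only [Function.comp_apply, smul_dotProduct, dotProduct_smul, smul_eq_mul, ← mul_assoc,
    Real.sqrt_mul (mul_self_nonneg t), Real.sqrt_mul_self_eq_abs]

end

namespace Matrix

variable {ι : Type*} [Fintype ι]

noncomputable def rayleighQuotient (M : Matrix ι ι ℝ) (x : ι → ℝ) : ℝ :=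
  x ⬝ᵥ (M *ᵥ x) / (x ⬝ᵥ x)

theorem rayleighQuotient_smul (M : Matrix ι ι ℝ) (x : ι → ℝ) {t : ℝ} (ht : t ≠ 0) :
    rayleighQuotient M (t • x) = rayleighQuotient M x := by
  simp only [rayleighQuotient, mulVec_smul, smul_dotProduct, dotProduct_smul, smul_eq_mul]
  rw [← mul_assoc, ← mul_assoc, mul_div_mul_left _ _ (mul_ne_zero ht ht)]

theorem rayleighQuotient_conj [DecidableEq ι] {Q : Matrix ι ι ℝ} (hQ : Q * Qᵀ = 1)
    (M : Matrix ι ι ℝ) (x : ι → ℝ) :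
    rayleighQuotient (Q * M * Qᵀ) x = rayleighQuotient M (Qᵀ *ᵥ x) := by
  have hQx : ∀ y, x ⬝ᵥ (Q *ᵥ y) = Qᵀ *ᵥ x ⬝ᵥ y := fun y => by
    rw [dotProduct_mulVec, mulVec_transpose]
  have hxx : x ⬝ᵥ x = Qᵀ *ᵥ x ⬝ᵥ Qᵀ *ᵥ x := by
    rw [← hQx, mulVec_mulVec, hQ, one_mulVec]
  rw [rayleighQuotient, rayleighQuotient, ← mulVec_mulVec, ← mulVec_mulVec, hQx, hxx]

theorem dotProduct_diagonal_mulVec [DecidableEq ι] (f x : ι → ℝ) :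
    x ⬝ᵥ (diagonal f *ᵥ x) = ∑ i, f i * x i ^ 2 := by
  simp only [dotProduct, mulVec_diagonal]
  exact Finset.sum_congr rfl fun i _ => by ring

theorem rayleighQuotient_diagonal_mem_Icc [DecidableEq ι] {f : ι → ℝ} {lo hi : ℝ}
    (hlo : ∀ i, lo ≤ f i) (hhi : ∀ i, f i ≤ hi) {x : ι → ℝ} (hx : x ≠ 0) :
    rayleighQuotient (diagonal f) x ∈ Icc lo hi := by
  have hxx : x ⬝ᵥ x = ∑ i, x i ^ 2 := by simp only [dotProduct, sq]
  have hpos := dotProduct_self_pos hx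
  rw [rayleighQuotient, dotProduct_diagonal_mulVec, Set.mem_Icc, le_div_iff₀ hpos,
    div_le_iff₀ hpos, hxx, Finset.mul_sum, Finset.mul_sum]
  exact ⟨Finset.sum_le_sum fun i _ => mul_le_mul_of_nonneg_right (hlo i) (sq_nonneg _),
    Finset.sum_le_sum fun i _ => mul_le_mul_of_nonneg_right (hhi i) (sq_nonneg _)⟩

theorem exists_rayleighQuotient_diagonal_eq [DecidableEq ι] {f : ι → ℝ} {i j : ι} {m : ℝ}
    (hm : m ∈ Icc (f i) (f j)) : ∃ x ≠ 0, rayleighQuotient (diagonal f) x = m := by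
  rcases hm.1.eq_or_lt with hi | hi
  · refine ⟨Pi.single i 1, by simp, ?_⟩
    simp [rayleighQuotient, hi]
  have hij : i ≠ j := by rintro rfl; linarith [hm.2]
  -- weights `f j - m` on `i` and `m - f i` on `j` average `f i` and `f j` to `m`
  set x : ι → ℝ := Pi.single i √(f j - m) + Pi.single j √(m - f i)
  have hi' := Real.mul_self_sqrt (sub_nonneg.2 hi.le)
  have hj' := Real.mul_self_sqrt (sub_nonneg.2 hm.2)
  have hxx : x ⬝ᵥ x = f j - f i := by
    simp only [x, dotProduct_add, dotProduct_single, Pi.add_apply, Pi.single_eq_same,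
      Pi.single_eq_of_ne hij, Pi.single_eq_of_ne hij.symm]
    linarith
  have hxMx : x ⬝ᵥ (diagonal f *ᵥ x) = m * (f j - f i) := by
    simp only [x, mulVec_add, diagonal_mulVec_single, dotProduct_add, dotProduct_single,
      Pi.add_apply, Pi.single_eq_same, Pi.single_eq_of_ne hij, Pi.single_eq_of_ne hij.symm]
    linear_combination f i * hj' + f j * hi'
  have hfij : f j - f i ≠ 0 := by linarith [hm.2]
  refine ⟨x, fun h => hfij (by rw [← hxx, h, dotProduct_zero]), ?_⟩
  rw [rayleighQuotient, hxMx, hxx, mul_div_cancel_right₀ _ hfij]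

theorem rayleighQuotient_conj_diagonal_mem_Icc [DecidableEq ι] {Q : Matrix ι ι ℝ}
    (hQ : Q * Qᵀ = 1) {f : ι → ℝ} {lo hi : ℝ} (hlo : ∀ i, lo ≤ f i) (hhi : ∀ i, f i ≤ hi)
    {x : ι → ℝ} (hx : x ≠ 0) : rayleighQuotient (Q * diagonal f * Qᵀ) x ∈ Icc lo hi := by
  rw [rayleighQuotient_conj hQ]
  refine rayleighQuotient_diagonal_mem_Icc hlo hhi fun h => hx ?_
  rw [← one_mulVec x, ← hQ, ← mulVec_mulVec, h, mulVec_zero]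

theorem exists_rayleighQuotient_conj_diagonal_eq [DecidableEq ι] {Q : Matrix ι ι ℝ}
    (hQ : Q * Qᵀ = 1) (hQ' : Qᵀ * Q = 1) {f : ι → ℝ} {i j : ι} {m : ℝ}
    (hm : m ∈ Icc (f i) (f j)) : ∃ x ≠ 0, rayleighQuotient (Q * diagonal f * Qᵀ) x = m := by
  obtain ⟨y, hy, hym⟩ := exists_rayleighQuotient_diagonal_eq hm
  have hQy : Qᵀ *ᵥ (Q *ᵥ y) = y := by rw [mulVec_mulVec, hQ', one_mulVec]
  refine ⟨Q *ᵥ y, fun h => hy ?_, by rw [rayleighQuotient_conj hQ, hQy, hym]⟩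
  rw [← hQy, h, mulVec_zero]

end Matrix

theorem Matrix.mulVec_sub_dotProduct_self {R ι κ : Type*} [CommRing R] [Fintype ι] [Fintype κ]
    (A : Matrix κ ι R) (x : ι → R) (b : κ → R) :
    (A *ᵥ x - b) ⬝ᵥ (A *ᵥ x - b) = x ⬝ᵥ ((Aᵀ * A) *ᵥ x) - 2 * (x ⬝ᵥ (Aᵀ *ᵥ b)) + b ⬝ᵥ b := by
  rw [← mulVec_mulVec, dotProduct_transpose_mulVec, dotProduct_transpose_mulVec]
  simp only [dotProduct_sub, sub_dotProduct, dotProduct_comm b (A *ᵥ x)]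
  ring

theorem dotProduct_hsgdDrift (n d : ℕ) (γ δ : ℝ) (A : Matrix (Fin n) (Fin d) ℝ) (b : Fin n → ℝ)
    (x : Fin d → ℝ) :
    x ⬝ᵥ hsgdDrift n d γ δ A b x
      = -γ * ((x ⬝ᵥ ((Aᵀ * A) *ᵥ x) - x ⬝ᵥ (Aᵀ *ᵥ b)) / n + δ * (x ⬝ᵥ x)) := by
  simp only [hsgdDrift, dotProduct_smul, dotProduct_add, ← mulVec_mulVec, mulVec_sub,
    dotProduct_sub, smul_eq_mul]
  ring

/-- `Φ_ρ(x) / ‖x‖⁴` as a polynomial in `m = ⟨x, AᵀAx⟩/‖x‖²`, `σ = ⟨x, Aᵀb⟩/‖x‖²` and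
`ε = 1/‖x‖²`, with `T = tr(AᵀA)` and `β = ‖b‖²`. -/
noncomputable def hsgdPhiProfile (n B : ℕ) (γ δ ρ T β m σ ε : ℝ) : ℝ :=
  (1 + ε) * (-2 * γ * ((m - σ) / n + δ) + γ ^ 2 / (n ^ 2 * B) * (m - 2 * σ + β * ε) * T) -
    (2 - ρ) * (γ ^ 2 / (n ^ 2 * B)) * (m - 2 * σ + β * ε) * m

theorem hsgdPhiProfile_zero_zero {n B : ℕ} (hn : n ≠ 0) (hB : B ≠ 0) {γ : ℝ} (hγ : γ ≠ 0)
    (δ ρ T β m : ℝ) :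
    hsgdPhiProfile n B γ δ ρ T β m 0 0 = -(γ ^ 2 / (n ^ 2 * B)) * qAux n B γ δ T m ρ := by
  unfold hsgdPhiProfile qAux
  field_simp
  ring

theorem hsgdPhi_div_sq_eq_profile (n d B : ℕ) (γ δ ρ : ℝ) (A : Matrix (Fin n) (Fin d) ℝ)
    (b : Fin n → ℝ) {x : Fin d → ℝ} (hx : x ⬝ᵥ x ≠ 0) :
    hsgdPhi n d B γ δ ρ A b x / (x ⬝ᵥ x) ^ 2 =
      hsgdPhiProfile n B γ δ ρ (Aᵀ * A).trace (b ⬝ᵥ b) ((Aᵀ * A).rayleighQuotient x)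
        (x ⬝ᵥ (Aᵀ *ᵥ b) / (x ⬝ᵥ x)) (x ⬝ᵥ x)⁻¹ := by
  rw [hsgdPhi, dotProduct_hsgdDrift, mulVec_sub_dotProduct_self, hsgdPhiProfile,
    rayleighQuotient]
  field_simp
  ring

theorem tendsto_hsgdPhi_div_sq_add_qAux {n d B : ℕ} (hn : n ≠ 0) (hB : B ≠ 0) {γ : ℝ}
    (hγ : γ ≠ 0) (δ ρ : ℝ) (A : Matrix (Fin n) (Fin d) ℝ) (b : Fin n → ℝ)
    {K : Set ℝ} (hK : IsCompact K) (hAK : ∀ x ≠ 0, (Aᵀ * A).rayleighQuotient x ∈ K) :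
    Tendsto (fun x => hsgdPhi n d B γ δ ρ A b x / (x ⬝ᵥ x) ^ 2 +
        γ ^ 2 / (n ^ 2 * B) * qAux n B γ δ (Aᵀ * A).trace ((Aᵀ * A).rayleighQuotient x) ρ)
      (comap (fun x : Fin d → ℝ => √(x ⬝ᵥ x)) atTop) (𝓝 0) := by
  set P := fun m (v : ℝ × ℝ) => hsgdPhiProfile n B γ δ ρ (Aᵀ * A).trace (b ⬝ᵥ b) m v.1 v.2
  have hP : Continuous (uncurry P) := by
    simp only [P, hsgdPhiProfile]
    fun_prop
  have hv := (tendsto_dotProduct_div_dotProduct_self (Aᵀ *ᵥ b)).prodMk_nhds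
    tendsto_dotProduct_self_comap_sqrt.inv_tendsto_atTop
  have hx0 : ∀ᶠ x in comap (fun x : Fin d → ℝ => √(x ⬝ᵥ x)) atTop, x ⬝ᵥ x ≠ 0 :=
    tendsto_dotProduct_self_comap_sqrt.eventually_ne_atTop 0
  refine (hK.tendsto_sub_of_eventually_mem hP
    (hx0.mono fun x hx => hAK x fun h => hx (h ▸ dotProduct_zero 0)) hv).congr' ?_
  filter_upwards [hx0] with x hx
  simp only [P, Pi.inv_apply, hsgdPhi_div_sq_eq_profile n d B γ δ ρ A b hx,
    hsgdPhiProfile_zero_zero hn hB hγ]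
  ring

theorem limsup_hsgdPhi_div_sq_eq {n d B : ℕ} (hn : n ≠ 0) (hB : B ≠ 0) {γ : ℝ} (hγ : γ ≠ 0)
    (δ ρ : ℝ) (A : Matrix (Fin n) (Fin d) ℝ) (b : Fin n → ℝ) {K : Set ℝ} (hK : IsCompact K)
    (hAK : ∀ x ≠ 0, (Aᵀ * A).rayleighQuotient x ∈ K) {m₀ : ℝ}
    (hmin : IsMinOn (fun m => qAux n B γ δ (Aᵀ * A).trace m ρ) K m₀) {u : Fin d → ℝ}
    (hu : u ≠ 0) (hum : (Aᵀ * A).rayleighQuotient u = m₀) :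
    limsup (fun x => hsgdPhi n d B γ δ ρ A b x / (x ⬝ᵥ x) ^ 2)
        (comap (fun x : Fin d → ℝ => √(x ⬝ᵥ x)) atTop) =
      -(γ ^ 2 / (n ^ 2 * B)) * qAux n B γ δ (Aᵀ * A).trace m₀ ρ := by
  have herr := tendsto_hsgdPhi_div_sq_add_qAux hn hB hγ δ ρ A b hK hAK
  refine limsup_eq_of_eventually_le_of_tendsto_comp (fun ε hε => ?_)
    (tendsto_smul_comap_sqrt_dotProduct_self hu) ?_
  · filter_upwards [herr.eventually (eventually_lt_nhds hε),
      tendsto_dotProduct_self_comap_sqrt.eventually_ne_atTop 0] with x hxε hx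
    have := mul_le_mul_of_nonneg_left (hmin (hAK x fun h => hx (h ▸ dotProduct_zero 0)))
      (by positivity : 0 ≤ γ ^ 2 / (n ^ 2 * B))
    linarith
  · have hray := (herr.comp (tendsto_smul_comap_sqrt_dotProduct_self hu)).sub_const
      (γ ^ 2 / (n ^ 2 * B) * qAux n B γ δ (Aᵀ * A).trace m₀ ρ)
    rw [zero_sub, ← neg_mul] at hray
    refine hray.congr' ?_
    filter_upwards [eventually_ne_atTop 0] with t ht
    simp only [Function.comp_apply, rayleighQuotient_smul _ _ ht, hum]
    ring

theorem limsup_Phi_eq_neg_inf_qAux (n d B : ℕ) (hn : 0 < n) (hd : 0 < d) (hB : 0 < B)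
    (γ δ : ℝ) (hγ : 0 < γ)
    (A : Matrix (Fin n) (Fin d) ℝ) (b : Fin n → ℝ)
    (lam : Fin d → ℝ) (hpos : ∀ i, 0 < lam i)
    (hdec : ∀ i j : Fin d, i ≤ j → lam j ≤ lam i)
    -- `λ1 ≥ … ≥ λ_d > 0` are the singular values of `A`
    (hsvd : ∃ Q : Matrix (Fin d) (Fin d) ℝ, Q * Qᵀ = 1 ∧ Qᵀ * Q = 1 ∧
      Aᵀ * A = Q * Matrix.diagonal (fun i => lam i ^ 2) * Qᵀ) :
    ∀ ρ : ℝ,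
      limsup (fun x : Fin d → ℝ => hsgdPhi n d B γ δ ρ A b x / (x ⬝ᵥ x) ^ 2)
          (comap (fun x : Fin d → ℝ => Real.sqrt (x ⬝ᵥ x)) atTop) =
        -(γ ^ 2 / (n ^ 2 * B)) *
          sInf ((fun m => qAux n B γ δ (∑ i, lam i ^ 2) m ρ) ''
            Set.Icc ((lam ⟨d - 1, by omega⟩) ^ 2) ((lam ⟨0, hd⟩) ^ 2)) := by
  intro ρ
  obtain ⟨Q, hQ, hQ', hAQ⟩ := hsvd
  set i₀ : Fin d := ⟨0, hd⟩
  set i₁ : Fin d := ⟨d - 1, by omega⟩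
  set q := fun m => qAux n B γ δ (∑ i, lam i ^ 2) m ρ
  have hlo : ∀ i, lam i₁ ^ 2 ≤ lam i ^ 2 := fun i =>
    pow_le_pow_left₀ (hpos _).le (hdec _ _ (Fin.le_def.2 (Nat.le_sub_one_of_lt i.2))) 2
  have hhi : ∀ i, lam i ^ 2 ≤ lam i₀ ^ 2 := fun i =>
    pow_le_pow_left₀ (hpos _).le (hdec _ _ (Fin.le_def.2 (Nat.zero_le _))) 2
  obtain ⟨m₀, hm₀, hmin⟩ := isCompact_Icc.exists_isMinOn (nonempty_Icc.2 (hlo i₀))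
    (by simp only [q, qAux]; fun_prop : Continuous q).continuousOn
  obtain ⟨u, hu, hum⟩ :=
    exists_rayleighQuotient_conj_diagonal_eq (f := fun i => lam i ^ 2) hQ hQ' hm₀
  have htrace : (Aᵀ * A).trace = ∑ i, lam i ^ 2 := by
    rw [hAQ, trace_mul_comm, ← mul_assoc, hQ', one_mul, trace_diagonal]
  rw [IsLeast.csInf_eq ⟨mem_image_of_mem q hm₀, forall_mem_image.2 hmin⟩,
    limsup_hsgdPhi_div_sq_eq hn.ne' hB.ne' hγ.ne' δ ρ A b isCompact_Icc
      (fun x hx => hAQ ▸ rayleighQuotient_conj_diagonal_mem_Icc hQ hlo hhi hx)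
      (by rwa [htrace]) hu (hAQ ▸ hum), htrace]
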